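/- (Lower bound ℓ ≥ t + 1.) Suppose the normalization hypothesis holds (there exist a symmetric m×m real matrix N and c > 0 with fᵢᵀ N fᵢ = c for all i and tr(N M⋆) = c), and suppose there exists w̃ ∈ P⋆ with w̃ᵢ > 0 for every i. Then the number ℓ of extreme points of P⋆ satisfies ℓ ≥ t + 1 = d − s + 1. -/

import Mathlib

open Matrix BigOperators

noncomputable section

/-- The information matrix `M(w) = ∑ i, wᵢ fᵢ fᵢᵀ`. -/
def infoM {d m : ℕ} (f : Fin d → Fin m → ℝ) (w : Fin d → ℝ) :
    Matrix (Fin m) (Fin m) ℝ :=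
  ∑ i, w i • Matrix.vecMulVec (f i) (f i)

/-- The probability simplex `P ⊆ ℝ^d`. -/
def simplexP (d : ℕ) : Set (Fin d → ℝ) :=
  {w | (∀ i, 0 ≤ w i) ∧ ∑ i, w i = 1}

/-- The polytope of optimal weights `P⋆ = {w ∈ P : M(w) = M⋆}`. -/
def Pstar {d m : ℕ} (f : Fin d → Fin m → ℝ)
    (Mstar : Matrix (Fin m) (Fin m) ℝ) : Set (Fin d → ℝ) :=
  {w | w ∈ simplexP d ∧ infoM f w = Mstar}

/-- `s`, the dimension of the linear span of `{f₁f₁ᵀ, …, f_d f_dᵀ}`. -/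
def spanDim {d m : ℕ} (f : Fin d → Fin m → ℝ) : ℕ :=
  Module.finrank ℝ (Submodule.span ℝ (Set.range fun i => Matrix.vecMulVec (f i) (f i)))

/-- `v` is an extreme point of the convex set `K`: `v ∈ K`, and whenever
`v = α • w₁ + (1 - α) • w₂` with `w₁, w₂ ∈ K` and `α ∈ (0,1)`, then `w₁ = w₂ = v`. -/
def IsExtremePt {E : Type*} [AddCommGroup E] [Module ℝ E] (K : Set E) (v : E) : Prop :=
  v ∈ K ∧ ∀ w₁ ∈ K, ∀ w₂ ∈ K, ∀ α : ℝ, 0 < α → α < 1 →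
    v = α • w₁ + (1 - α) • w₂ → w₁ = v ∧ w₂ = v

/-- The support `S(w) = {i : wᵢ ≠ 0}`. -/
def supp {d : ℕ} (w : Fin d → ℝ) : Set (Fin d) := {i | w i ≠ 0}

/-! Two extreme points of `P⋆` with the same support differ by a direction along which either one
can be moved both ways inside `P⋆`, so the support map is injective on extreme points and there
are only finitely many of them.

For the bound, the normalization gives `tr (N M(u)) = c ∑ uᵢ`, so every `u ∈ ker M` has
`∑ uᵢ = 0`; as `w̃` is strictly positive, `w̃ + s u ∈ P⋆` for small `s`. Hence `ker M`, of dimension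
`d - s` by rank–nullity, lies in the direction of the affine span of `P⋆`, which by Krein–Milman is
the affine span of its `ℓ` extreme points and so has dimension at most `ℓ - 1`. -/

open Filter Topology

lemma isExtremePt_iff_mem_extremePoints {E : Type*} [AddCommGroup E] [Module ℝ E] {K : Set E}
    {v : E} : IsExtremePt K v ↔ v ∈ K.extremePoints ℝ := by
  rw [mem_extremePoints]
  refine and_congr_right fun _ => forall₄_congr fun w₁ _ w₂ _ => ?_
  constructor
  · rintro h ⟨a, b, ha, hb, hab, rfl⟩
    exact h a ha (by linarith) (by rw [← hab, add_sub_cancel_left])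
  · intro h a ha ha1 hv
    exact h ⟨a, 1 - a, ha, by linarith, by ring, hv.symm⟩

lemma eq_zero_of_add_smul_mem_of_mem_extremePoints {E : Type*} [AddCommGroup E] [Module ℝ E]
    {K : Set E} {v u : E} (hv : v ∈ K.extremePoints ℝ)
    (hu : ∀ᶠ s in 𝓝 (0 : ℝ), v + s • u ∈ K) : u = 0 := by
  obtain ⟨ε, hε, hball⟩ := Metric.eventually_nhds_iff.1 hu
  have hmem : ∀ s, |s| < ε → v + s • u ∈ K := fun s hs => hball (by simpa using hs)
  have hseg : v ∈ openSegment ℝ (v + (ε / 2) • u) (v + (-(ε / 2)) • u) :=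
    ⟨1 / 2, 1 / 2, by norm_num, by norm_num, by norm_num, by module⟩
  have h := (mem_extremePoints.1 hv).2 _ (hmem _ (by rw [abs_of_pos (by positivity)]; linarith))
    _ (hmem _ (by rw [abs_neg, abs_of_pos (by positivity)]; linarith)) hseg
  simpa [hε.ne'] using h.1

lemma eventually_nonneg_add_mul {ι : Type*} [Finite ι] {w u : ι → ℝ} (hw : ∀ i, 0 ≤ w i)
    (hu : ∀ i, w i = 0 → u i = 0) : ∀ᶠ s in 𝓝 (0 : ℝ), ∀ i, 0 ≤ w i + s * u i := by
  refine eventually_all.2 fun i => ?_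
  rcases (hw i).eq_or_lt with h | h
  · simp [← h, hu i h.symm]
  · have : Tendsto (fun s : ℝ => w i + s * u i) (𝓝 0) (𝓝 (w i)) :=
      (by fun_prop : Continuous fun s : ℝ => w i + s * u i).tendsto' 0 (w i) (by simp)
    exact (this.eventually (lt_mem_nhds h)).mono fun _ => le_of_lt

lemma subset_affineSpan_extremePoints {E : Type*} [NormedAddCommGroup E] [NormedSpace ℝ E]
    [FiniteDimensional ℝ E] {K : Set E} (hK : IsCompact K) (hconv : Convex ℝ K) :
    K ⊆ affineSpan ℝ (K.extremePoints ℝ) :=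
  calc K = closure (convexHull ℝ (K.extremePoints ℝ)) :=
        (closure_convexHull_extremePoints hK hconv).symm
    _ ⊆ affineSpan ℝ (K.extremePoints ℝ) :=
        closure_minimal (convexHull_subset_affineSpan _)
          (affineSpan ℝ _).closed_of_finiteDimensional

lemma Set.Finite.finrank_vectorSpan_add_one_le_ncard {k V P : Type*} [DivisionRing k]
    [AddCommGroup V] [Module k V] [AddTorsor V P] {S : Set P} (hS : S.Finite)
    (hne : S.Nonempty) : Module.finrank k (vectorSpan k S) + 1 ≤ S.ncard := by
  have := hS.fintype
  have := hne.to_subtype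
  have h := finrank_vectorSpan_range_add_one_le k ((↑) : S → P)
  rwa [Subtype.range_coe, ← Nat.card_eq_fintype_card, Nat.card_coe_set_eq] at h

section Pstar

variable {d m : ℕ} {f : Fin d → Fin m → ℝ} {Mstar : Matrix (Fin m) (Fin m) ℝ}

variable (f) in
def infoL : (Fin d → ℝ) →ₗ[ℝ] Matrix (Fin m) (Fin m) ℝ :=
  Fintype.linearCombination ℝ fun i => vecMulVec (f i) (f i)

variable (f) in
lemma coe_infoL : ⇑(infoL f) = infoM f :=
  funext fun w => Fintype.linearCombination_apply ℝ _ w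

variable (f Mstar) in
lemma Pstar_eq_inter : Pstar f Mstar = stdSimplex ℝ (Fin d) ∩ infoL f ⁻¹' {Mstar} := by
  rw [coe_infoL]; rfl

lemma isCompact_Pstar : IsCompact (Pstar f Mstar) := by
  rw [Pstar_eq_inter]
  exact (isCompact_stdSimplex _ _).inter_right
    (isClosed_singleton.preimage (infoL f).continuous_of_finiteDimensional)

lemma convex_Pstar : Convex ℝ (Pstar f Mstar) := by
  rw [Pstar_eq_inter]
  exact (convex_stdSimplex ℝ _).inter ((convex_singleton Mstar).linear_preimage (infoL f))

variable (f) in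
lemma finrank_ker_infoL : Module.finrank ℝ (LinearMap.ker (infoL f)) = d - spanDim f := by
  have := LinearMap.finrank_range_add_finrank_ker (infoL f)
  rw [infoL, Fintype.range_linearCombination, Module.finrank_fin_fun] at this
  rw [spanDim, infoL]
  omega

lemma eventually_add_smul_mem_Pstar {w u : Fin d → ℝ} (hw : w ∈ Pstar f Mstar)
    (hker : infoM f u = 0) (hsum : ∑ i, u i = 0) (hsupp : ∀ i, w i = 0 → u i = 0) :
    ∀ᶠ s in 𝓝 (0 : ℝ), w + s • u ∈ Pstar f Mstar := by
  filter_upwards [eventually_nonneg_add_mul hw.1.1 hsupp] with s hs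
  refine ⟨⟨hs, ?_⟩, ?_⟩
  · simp [Finset.sum_add_distrib, ← Finset.mul_sum, hsum, hw.1.2]
  · rw [← coe_infoL, map_add, map_smul, coe_infoL, hw.2, hker, smul_zero, add_zero]

lemma injOn_supp_extremePoints_Pstar : Set.InjOn supp ((Pstar f Mstar).extremePoints ℝ) := by
  intro v₁ h₁ v₂ h₂ hsupp
  rw [← sub_eq_zero]
  refine eq_zero_of_add_smul_mem_of_mem_extremePoints h₁
    (eventually_add_smul_mem_Pstar h₁.1 ?_ ?_ fun i hi => ?_)
  · rw [← coe_infoL, map_sub, coe_infoL, h₁.1.2, h₂.1.2, sub_self]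
  · simp [Finset.sum_sub_distrib, h₁.1.1.2, h₂.1.1.2]
  · have : v₂ i = 0 := by simpa [supp, hi] using Set.ext_iff.1 hsupp i
    simp [hi, this]

lemma finite_extremePoints_Pstar : ((Pstar f Mstar).extremePoints ℝ).Finite :=
  Set.Finite.of_finite_image (Set.toFinite _) injOn_supp_extremePoints_Pstar

lemma trace_mul_infoM {N : Matrix (Fin m) (Fin m) ℝ} {c : ℝ}
    (hfi : ∀ i, f i ⬝ᵥ N *ᵥ f i = c) (w : Fin d → ℝ) :
    trace (N * infoM f w) = c * ∑ i, w i := by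
  have hfi' : ∀ i, N *ᵥ f i ⬝ᵥ f i = c := fun i => by rw [dotProduct_comm]; exact hfi i
  simp [infoM, trace_sum, mul_vecMulVec, hfi', Finset.mul_sum, mul_comm]

lemma ker_infoL_le_vectorSpan_extremePoints {N : Matrix (Fin m) (Fin m) ℝ} {c : ℝ} (hc : 0 < c)
    (hfi : ∀ i, f i ⬝ᵥ N *ᵥ f i = c) {wt : Fin d → ℝ} (hwt : wt ∈ Pstar f Mstar)
    (hpos : ∀ i, 0 < wt i) :
    LinearMap.ker (infoL f) ≤ vectorSpan ℝ ((Pstar f Mstar).extremePoints ℝ) := by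
  intro u hu
  rw [LinearMap.mem_ker, coe_infoL] at hu
  have hsum : ∑ i, u i = 0 := by
    have := trace_mul_infoM hfi u
    rw [hu, Matrix.mul_zero, trace_zero] at this
    exact (mul_eq_zero.1 this.symm).resolve_left hc.ne'
  have hev := eventually_add_smul_mem_Pstar hwt hu hsum fun i hi => absurd hi (hpos i).ne'
  obtain ⟨s, hs, hs0⟩ :=
    ((eventually_nhdsWithin_of_eventually_nhds hev).and
      (self_mem_nhdsWithin : {0}ᶜ ∈ 𝓝[≠] (0 : ℝ))).exists
  have hspan : Pstar f Mstar ⊆ affineSpan ℝ ((Pstar f Mstar).extremePoints ℝ) :=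
    subset_affineSpan_extremePoints isCompact_Pstar convex_Pstar
  have hdir := AffineSubspace.vsub_mem_direction (hspan hs) (hspan hwt)
  rw [direction_affineSpan, vsub_eq_sub, add_sub_cancel_left] at hdir
  exact (Submodule.smul_mem_iff _ hs0).1 hdir

end Pstar

theorem stmt16_general (d m : ℕ)
    (f : Fin d → Fin m → ℝ) (Mstar : Matrix (Fin m) (Fin m) ℝ)
    (N : Matrix (Fin m) (Fin m) ℝ)
    (c : ℝ) (hc : 0 < c)
    (hfi : ∀ i, f i ⬝ᵥ N.mulVec (f i) = c)
    (wt : Fin d → ℝ) (hwt : wt ∈ Pstar f Mstar) (hpos : ∀ i, 0 < wt i) :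
    {v | IsExtremePt (Pstar f Mstar) v}.Finite ∧
    d - spanDim f + 1 ≤ {v | IsExtremePt (Pstar f Mstar) v}.ncard := by
  have hext : {v | IsExtremePt (Pstar f Mstar) v} = (Pstar f Mstar).extremePoints ℝ :=
    Set.ext fun _ => isExtremePt_iff_mem_extremePoints
  rw [hext]
  refine ⟨finite_extremePoints_Pstar, ?_⟩
  calc d - spanDim f + 1 = Module.finrank ℝ (LinearMap.ker (infoL f)) + 1 := by
        rw [finrank_ker_infoL]
    _ ≤ Module.finrank ℝ (vectorSpan ℝ ((Pstar f Mstar).extremePoints ℝ)) + 1 := by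
        gcongr
        exact Submodule.finrank_mono (ker_infoL_le_vectorSpan_extremePoints hc hfi hwt hpos)
    _ ≤ ((Pstar f Mstar).extremePoints ℝ).ncard :=
        finite_extremePoints_Pstar.finrank_vectorSpan_add_one_le_ncard
          (isCompact_Pstar.extremePoints_nonempty ⟨wt, hwt⟩)

/-- under the normalization hypothesis and the existence of `w̃ ∈ P⋆`
with all components positive, the number `ℓ` of extreme points of `P⋆` satisfies
`ℓ ≥ t + 1 = d - s + 1`. -/
theorem stmt16 (d m : ℕ) (hd : 0 < d) (hm : 0 < m)
    (f : Fin d → Fin m → ℝ) (Mstar : Matrix (Fin m) (Fin m) ℝ)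
    (N : Matrix (Fin m) (Fin m) ℝ) (hN : N.IsSymm)
    (c : ℝ) (hc : 0 < c)
    (hfi : ∀ i, f i ⬝ᵥ N.mulVec (f i) = c)
    (htr : Matrix.trace (N * Mstar) = c)
    (wt : Fin d → ℝ) (hwt : wt ∈ Pstar f Mstar) (hpos : ∀ i, 0 < wt i) :
    {v | IsExtremePt (Pstar f Mstar) v}.Finite ∧
    d - spanDim f + 1 ≤ {v | IsExtremePt (Pstar f Mstar) v}.ncard :=
  stmt16_general d m f Mstar N c hc hfi wt hwt hpos
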